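/- Let P₁, P₂, τ₁, τ₂ > 0 satisfy τ₂·γ(P₁) ≤ τ₁·(γ(P₁+P₂) − γ(P₁)) (Case I), write a = γ(P₁), b = γ(P₂), s = γ(P₁+P₂), and let R = {(d₁, d₂) ∈ ℝ² : a·d₁ ≥ τ₁, b·d₂ ≥ τ₂, a·d₁ + (s−a)·d₂ ≥ τ₁ + τ₂}. Then the point (τ₁/a, τ₁/a) belongs to R, and for every (d₁, d₂) ∈ R one has max{d₁, d₂} ≥ τ₁/a; in other words, the minimum over R of max{d₁, d₂} equals τ₁/γ(P₁). -/

import Mathlib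

/-- γ(x) = (1/2)·log₂(1+x). -/
noncomputable def gam (x : ℝ) : ℝ := (1/2) * Real.logb 2 (1 + x)

/-! Since γ(P₁+P₂) − γ(P₁) ≤ γ(P₂), the Case I condition τ₂·γ(P₁) ≤ τ₁·(γ(P₁+P₂) − γ(P₁)) makes
the diagonal point (τ₁/γ(P₁), τ₁/γ(P₁)) satisfy all three rate constraints, while the first
constraint alone forces d₁ ≥ τ₁/γ(P₁) everywhere in the region. -/

lemma gam_pos {x : ℝ} (hx : 0 < x) : 0 < gam x := by
  have := Real.logb_pos (by norm_num : (1 : ℝ) < 2) (by linarith : (1 : ℝ) < 1 + x)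
  unfold gam
  positivity

lemma gam_add_le {x y : ℝ} (hx : 0 ≤ x) (hy : 0 ≤ y) : gam (x + y) ≤ gam x + gam y := by
  have hlog : Real.logb 2 (1 + (x + y)) ≤ Real.logb 2 (1 + x) + Real.logb 2 (1 + y) := by
    rw [← Real.logb_mul (by positivity) (by positivity)]
    exact Real.logb_le_logb_of_le (by norm_num) (by positivity) (by nlinarith)
  unfold gam
  linarith

def completionRegion (a b s τ₁ τ₂ : ℝ) : Set (ℝ × ℝ) :=
  {d | a * d.1 ≥ τ₁ ∧ b * d.2 ≥ τ₂ ∧ a * d.1 + (s - a) * d.2 ≥ τ₁ + τ₂}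

lemma diag_mem_completionRegion {a b s τ₁ τ₂ : ℝ} (ha : 0 < a) (hτ₁ : 0 ≤ τ₁)
    (hb : s - a ≤ b) (hcase : τ₂ * a ≤ τ₁ * (s - a)) :
    (τ₁ / a, τ₁ / a) ∈ completionRegion a b s τ₁ τ₂ := by
  have hdiag : a * (τ₁ / a) = τ₁ := mul_div_cancel₀ τ₁ ha.ne'
  refine ⟨hdiag.ge, ?_, ?_⟩
  · calc τ₂ = τ₂ * a / a := (mul_div_cancel_right₀ τ₂ ha.ne').symm
      _ ≤ τ₁ * b / a := by gcongr ?_ / a; exact hcase.trans (by gcongr)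
      _ = b * (τ₁ / a) := by ring
  · calc τ₁ + τ₂ = τ₁ + τ₂ * a / a := by rw [mul_div_cancel_right₀ τ₂ ha.ne']
      _ ≤ τ₁ + τ₁ * (s - a) / a := by gcongr
      _ = a * (τ₁ / a) + (s - a) * (τ₁ / a) := by rw [hdiag]; ring

lemma div_le_max_of_mem_completionRegion {a b s τ₁ τ₂ : ℝ} (ha : 0 < a) {d : ℝ × ℝ}
    (hd : d ∈ completionRegion a b s τ₁ τ₂) : τ₁ / a ≤ max d.1 d.2 :=
  ((div_le_iff₀' ha).2 hd.1).trans (le_max_left _ _)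

theorem stmt_17_general (P₁ P₂ τ₁ τ₂ a b s : ℝ) (hP₁ : 0 < P₁) (hP₂ : 0 < P₂)
    (hτ₁ : 0 < τ₁)
    (ha : a = gam P₁) (hb : b = gam P₂) (hs : s = gam (P₁ + P₂))
    (hcase : τ₂ * a ≤ τ₁ * (s - a))
    (R : Set (ℝ × ℝ))
    (hR : R = {d : ℝ × ℝ | a * d.1 ≥ τ₁ ∧ b * d.2 ≥ τ₂ ∧
        a * d.1 + (s - a) * d.2 ≥ τ₁ + τ₂}) :
    (τ₁ / a, τ₁ / a) ∈ R ∧ ∀ d : ℝ × ℝ, d ∈ R → τ₁ / a ≤ max d.1 d.2 := by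
  change R = completionRegion a b s τ₁ τ₂ at hR
  subst hR
  have ha₀ : 0 < a := ha ▸ gam_pos hP₁
  have hsa : s - a ≤ b := by
    subst ha hb hs
    linarith [gam_add_le hP₁.le hP₂.le]
  exact ⟨diag_mem_completionRegion ha₀ hτ₁.le hsa hcase,
    fun d hd => div_le_max_of_mem_completionRegion ha₀ hd⟩

theorem stmt_17 (P₁ P₂ τ₁ τ₂ a b s : ℝ) (hP₁ : 0 < P₁) (hP₂ : 0 < P₂)
    (hτ₁ : 0 < τ₁) (hτ₂ : 0 < τ₂)
    (ha : a = gam P₁) (hb : b = gam P₂) (hs : s = gam (P₁ + P₂))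
    (hcase : τ₂ * a ≤ τ₁ * (s - a))
    (R : Set (ℝ × ℝ))
    (hR : R = {d : ℝ × ℝ | a * d.1 ≥ τ₁ ∧ b * d.2 ≥ τ₂ ∧
        a * d.1 + (s - a) * d.2 ≥ τ₁ + τ₂}) :
    (τ₁ / a, τ₁ / a) ∈ R ∧ ∀ d : ℝ × ℝ, d ∈ R → τ₁ / a ≤ max d.1 d.2 :=
  stmt_17_general P₁ P₂ τ₁ τ₂ a b s hP₁ hP₂ hτ₁ ha hb hs hcase R hR
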